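/- Let G be a finitely generated group with at least two ends, i.e. e(G) ≥ 2. Then there exists a G-effectively closed subshift (over the alphabet {0,1,2}) which is not sofic. -/

import Mathlib

open scoped Classical

noncomputable section

namespace SDG

/-! ### Relativized computability -/

/-- Partial recursive functions `ℕ →. ℕ` relative to an oracle `O`. -/
inductive NatPartrecIn (O : ℕ →. ℕ) : (ℕ →. ℕ) → Prop
  | oracle : NatPartrecIn O O
  | zero : NatPartrecIn O (pure 0)
  | succ : NatPartrecIn O Nat.succ
  | left : NatPartrecIn O ↑fun n : ℕ => n.unpair.1
  | right : NatPartrecIn O ↑fun n : ℕ => n.unpair.2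
  | pair {f g} : NatPartrecIn O f → NatPartrecIn O g →
      NatPartrecIn O fun n => Nat.pair <$> f n <*> g n
  | comp {f g} : NatPartrecIn O f → NatPartrecIn O g →
      NatPartrecIn O fun n => g n >>= f
  | prec {f g} : NatPartrecIn O f → NatPartrecIn O g →
      NatPartrecIn O (Nat.unpaired fun a n =>
        n.rec (f a) fun y IH => do let i ← IH; g (Nat.pair a (Nat.pair y i)))
  | rfind {f} : NatPartrecIn O f →
      NatPartrecIn O fun a => Nat.rfind fun n => (fun m => m = 0) <$> f (Nat.pair a n)

/-- A partial function between `Primcodable` types is partial recursive in the oracle `O`. -/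
def PartrecIn (O : ℕ →. ℕ) {α σ : Type} [Primcodable α] [Primcodable σ] (f : α →. σ) : Prop :=
  NatPartrecIn O fun n =>
    Part.bind (Part.ofOption (Encodable.decode (α := α) n)) fun a => (f a).map Encodable.encode

/-- A predicate is recursively enumerable in the oracle `O` if it is the domain of a partial
function recursive in `O`. -/
def RePredIn (O : ℕ →. ℕ) {α : Type} [Primcodable α] (p : α → Prop) : Prop :=
  PartrecIn O fun a => Part.assert (p a) fun _ => Part.some ()

/-- The characteristic function (as an oracle `ℕ →. ℕ`) of a set `L` of elements of a
`Primcodable` type: on the code of an element of `L` it answers `1`, elsewhere `0`. -/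
def charFun {α : Type} [Primcodable α] (L : Set α) : ℕ →. ℕ :=
  fun n => Part.some (if ∃ a ∈ L, Encodable.encode a = n then 1 else 0)

/-! ### Finitely generated groups, words and pattern codings -/

variable {G : Type} [Group G]

/-- The group element represented by a word over the generators `S`. -/
def wordEval {k : ℕ} (S : Fin k → G) (w : List (Fin k)) : G :=
  (w.map S).prod

/-- `S : Fin k → G` is a finite symmetric generating family containing the identity. -/
def IsGenData {k : ℕ} (S : Fin k → G) : Prop :=
  (∃ i, S i = 1) ∧ (∀ i, ∃ j, S j = (S i)⁻¹) ∧ Subgroup.closure (Set.range S) = ⊤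

/-- The word problem of `G` with respect to the generating family `S`. -/
def WP {k : ℕ} (S : Fin k → G) : Set (List (Fin k)) :=
  {w | wordEval S w = 1}

/-- A pattern coding over the alphabet `A`: a finite list of pairs (word, symbol). -/
abbrev PatternCoding (k : ℕ) (A : Type) : Type :=
  List (List (Fin k) × A)

/-- The subshift defined by a set `C` of pattern codings: configurations in which no translate
of a coded pattern occurs. -/
def XC {k : ℕ} (S : Fin k → G) {A : Type} (C : Set (PatternCoding k A)) : Set (G → A) :=
  {x | ¬ ∃ (g : G) (c : PatternCoding k A), c ∈ C ∧ ∀ p ∈ c, x (g * wordEval S p.1) = p.2}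

/-- A set is effectively closed if it is defined by a recursively enumerable set of
pattern codings. -/
def EffectivelyClosed {k : ℕ} (S : Fin k → G) {A : Type} [Primcodable A]
    (X : Set (G → A)) : Prop :=
  ∃ C : Set (PatternCoding k A), REPred (· ∈ C) ∧ X = XC S C

/-- A set is `G`-effectively closed if it is defined by a set of pattern codings which is
recursively enumerable with oracle the word problem of `G`. -/
def GEffectivelyClosed {k : ℕ} (S : Fin k → G) {A : Type} [Primcodable A]
    (X : Set (G → A)) : Prop :=
  ∃ C : Set (PatternCoding k A), RePredIn (charFun (WP S)) (· ∈ C) ∧ X = XC S C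

/-- A pattern coding is consistent if words representing the same group element receive the
same symbol. -/
def Consistent {k : ℕ} (S : Fin k → G) {A : Type} (c : PatternCoding k A) : Prop :=
  ∀ p ∈ c, ∀ q ∈ c, wordEval S p.1 = wordEval S q.1 → p.2 = q.2

/-! ### Subshifts, SFTs, sofic subshifts -/

/-- `X ⊆ A^G` is a subshift: closed (for the product of the discrete topology) and
shift-invariant. -/
def IsSubshift {A : Type} (X : Set (G → A)) : Prop :=
  (letI : TopologicalSpace A := ⊥; IsClosed X) ∧
    ∀ x ∈ X, ∀ g : G, (fun h => x (g⁻¹ * h)) ∈ X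

/-- A pattern with finite support over the alphabet `A`. -/
structure Pattern (G : Type) (A : Type) where
  supp : Finset G
  val : (g : G) → g ∈ supp → A

/-- The pattern `p` occurs in the configuration `x` at position `g`. -/
def PatternOccurs {A : Type} (p : Pattern G A) (x : G → A) (g : G) : Prop :=
  ∀ (h : G) (hh : h ∈ p.supp), x (g * h) = p.val h hh

/-- The subshift defined by a set of forbidden patterns. -/
def XPat {A : Type} (Fs : Set (Pattern G A)) : Set (G → A) :=
  {x | ¬ ∃ (g : G) (p : Pattern G A), p ∈ Fs ∧ PatternOccurs p x g}

/-- A subshift of finite type: defined by a finite set of forbidden patterns. -/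
def IsSFT {A : Type} (X : Set (G → A)) : Prop :=
  ∃ Fs : Set (Pattern G A), Fs.Finite ∧ X = XPat Fs

/-- A witness that `X` is sofic: an SFT `Y` over a finite alphabet `B` together with a factor
code (continuous shift-equivariant surjection) from `Y` onto `X`. -/
structure SoficVia (G : Type) [Group G] {A : Type} (X : Set (G → A)) : Type 1 where
  B : Type
  finB : Fintype B
  Y : Set (G → B)
  sft : IsSFT Y
  subY : IsSubshift Y
  phi : (G → B) → (G → A)
  cont : letI : TopologicalSpace B := ⊥
         letI : TopologicalSpace A := ⊥
         ContinuousOn phi Y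
  equiv : ∀ y ∈ Y, ∀ g : G, phi (fun h => y (g⁻¹ * h)) = fun h => phi y (g⁻¹ * h)
  image : phi '' Y = X

/-- A subshift is sofic if it is the image of an SFT under a factor code. -/
def IsSofic {A : Type} (X : Set (G → A)) : Prop :=
  Nonempty (SoficVia G X)

/-- A factor code from `X` onto `Y`: continuous (discrete product topologies),
shift-equivariant and surjective. -/
def FactorCode {A B : Type} (X : Set (G → A)) (Y : Set (G → B))
    (φ : (G → A) → (G → B)) : Prop :=
  (letI : TopologicalSpace A := ⊥
   letI : TopologicalSpace B := ⊥
   ContinuousOn φ X) ∧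
  (∀ x ∈ X, ∀ g : G, φ (fun h => x (g⁻¹ * h)) = fun h => φ x (g⁻¹ * h)) ∧
  φ '' X = Y

/-- Two subshifts are conjugate if there is a shift-equivariant homeomorphism between them. -/
def Conjugate {A B : Type} (X : Set (G → A)) (Y : Set (G → B)) : Prop :=
  ∃ (φ : (G → A) → (G → B)) (ψ : (G → B) → (G → A)),
    FactorCode X Y φ ∧ FactorCode Y X ψ ∧
    (∀ x ∈ X, ψ (φ x) = x) ∧ (∀ y ∈ Y, φ (ψ y) = y)

/-- The one-or-less subshift: configurations with at most one occurrence of the symbol `1`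
(represented by `true`). -/
def Xle1 (G : Type) : Set (G → Bool) :=
  {x | ∀ g h : G, x g = true → x h = true → g = h}

/-! ### `G`-machines -/

/-- A `G`-machine: finite set of states, finite tape alphabet `A` with a blank symbol, initial
state, accepting states, and a transition function moving with the generators `Fin k`. -/
structure GMachine (k : ℕ) (A : Type) : Type 1 where
  Q : Type
  finQ : Fintype Q
  blank : A
  q0 : Q
  QF : Set Q
  delta : A × Q → A × Q × Fin k

/-- One step of a `G`-machine in the fixed head model: if `δ(x(1),q) = (a,q',s)` then the new
configuration is `σ_{s⁻¹} x̃` where `x̃` is `x` with the value at `1` replaced by `a`. -/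
def GMachine.step {k : ℕ} {A : Type} (M : GMachine k A) (S : Fin k → G) :
    (G → A) × M.Q → (G → A) × M.Q :=
  fun xq =>
    let t := M.delta (xq.1 1, xq.2)
    let xt : G → A := Function.update xq.1 1 t.1
    (fun h => xt (S t.2.2 * h), t.2.1)

/-- The configuration which equals the pattern `p` on its support and `blank` elsewhere. -/
def Pattern.config {A : Type} (p : Pattern G A) (blank : A) : G → A :=
  fun g => if h : g ∈ p.supp then p.val g h else blank

/-- The `G`-machine `M` accepts the pattern `p` if starting from the configuration `x^p` in the
initial state it eventually reaches an accepting state. -/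
def GMachine.Accepts {k : ℕ} {A : Type} (M : GMachine k A) (S : Fin k → G)
    (p : Pattern G A) : Prop :=
  ∃ n : ℕ, ((M.step S)^[n] (p.config M.blank, M.q0)).2 ∈ M.QF

/-- A set of patterns is `G`-recursively enumerable if some `G`-machine accepts exactly its
elements. -/
def GRecEnum {k : ℕ} (S : Fin k → G) {A : Type} (L : Set (Pattern G A)) : Prop :=
  ∃ M : GMachine k A, ∀ p : Pattern G A, M.Accepts S p ↔ p ∈ L

/-- The consistent pattern coding `c` defines the pattern `p`. -/
def Defines {k : ℕ} (S : Fin k → G) {A : Type} (c : PatternCoding k A)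
    (p : Pattern G A) : Prop :=
  (∀ g : G, g ∈ p.supp ↔ ∃ q ∈ c, wordEval S q.1 = g) ∧
  ∀ q ∈ c, ∀ hg : wordEval S q.1 ∈ p.supp, p.val (wordEval S q.1) hg = q.2

/-- `p(C)`: the set of patterns defined by the consistent pattern codings of `C`. -/
def patternsOf {k : ℕ} (S : Fin k → G) {A : Type} (C : Set (PatternCoding k A)) :
    Set (Pattern G A) :=
  {p | ∃ c ∈ C, Consistent S c ∧ Defines S c p}

/-- A set of patterns is closed by extensions if any pattern extending a pattern of the set
also belongs to the set. -/
def ClosedByExtensions {A : Type} (L : Set (Pattern G A)) : Prop :=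
  ∀ (p₁ p₂ : Pattern G A) (hsub : p₁.supp ⊆ p₂.supp),
    (∀ (g : G) (hg : g ∈ p₁.supp), p₂.val g (hsub hg) = p₁.val g hg) →
    p₁ ∈ L → p₂ ∈ L

/-! ### Balls, ends, amenability -/

/-- The ball of radius `n` in the word metric given by `S`. -/
def ballS {k : ℕ} (S : Fin k → G) (n : ℕ) : Set G :=
  {x | ∃ w : List (Fin k), w.length ≤ n ∧ wordEval S w = x}

/-- Adjacency in the Cayley graph restricted to the set `V`. -/
def Adj {k : ℕ} (S : Fin k → G) (V : Set G) (a b : G) : Prop :=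
  a ∈ V ∧ b ∈ V ∧ ∃ i, a * S i = b

/-- Reachability inside `V` in the Cayley graph of `(G,S)`. -/
def Reach {k : ℕ} (S : Fin k → G) (V : Set G) (a b : G) : Prop :=
  Relation.ReflTransGen (Adj S V) a b

/-- `G` has at least two ends: for some `n`, the complement of the ball of radius `n` in the
Cayley graph has at least two infinite connected components. -/
def HasTwoOrMoreEnds {k : ℕ} (S : Fin k → G) : Prop :=
  ∃ (n : ℕ) (x y : G), x ∉ ballS S n ∧ y ∉ ballS S n ∧
    {z | Reach S (ballS S n)ᶜ x z}.Infinite ∧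
    {z | Reach S (ballS S n)ᶜ y z}.Infinite ∧
    ¬ Reach S (ballS S n)ᶜ x y

/-- The Følner condition: `G` is amenable. -/
def FolnerAmenable (G : Type) [Group G] : Prop :=
  ∀ (K : Finset G) (ε : ℝ), 0 < ε →
    ∃ F : Finset G, F.Nonempty ∧ ∀ k ∈ K,
      ((F \ F.image (fun x => x * k)).card : ℝ) < ε * F.card

/-! ### `G × ℤ`, presentations, hardness and the domino problems -/

/-- Generators of `G × ℤ`: the generators of `G` paired with `0`, together with `(1,±1)`. -/
def prodGens {k : ℕ} (S : Fin k → G) : Fin (k + 2) → G × Multiplicative ℤ :=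
  fun i =>
    if h : (i : ℕ) < k then (S ⟨i, h⟩, 1)
    else if (i : ℕ) = k then (1, Multiplicative.ofAdd 1)
    else (1, Multiplicative.ofAdd (-1))

/-- The element of the free group over the generator indices represented by a word. -/
def freeWord {k : ℕ} (w : List (Fin k)) : FreeGroup (Fin k) :=
  (w.map FreeGroup.of).prod

/-- `G` is recursively presented with respect to `S`: there is a recursively enumerable set of
relators (words over the generators) whose normal closure in the free group over the
generator indices is the kernel of the evaluation map. -/
def RecursivelyPresented {k : ℕ} (S : Fin k → G) : Prop :=
  ∃ R : Set (List (Fin k)), REPred (· ∈ R) ∧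
    MonoidHom.ker (FreeGroup.lift S) = Subgroup.normalClosure (freeWord '' R)

/-- `L` is hard for the class of predicates recursively enumerable in the oracle `O`
(equivalently, hard for the halting problem of machines with oracle `O`): every
such predicate many-one reduces to `L` via a computable function. -/
def OracleREHard {α : Type} [Primcodable α] (O : ℕ →. ℕ) (L : Set α) : Prop :=
  ∀ p : ℕ → Prop, RePredIn O p → ∃ f : ℕ → α, Computable f ∧ ∀ n, p n ↔ f n ∈ L

/-- The domino problem of `(K,T)`: pairs `(N, F)` of an alphabet size and a finite list of
pattern codings over `ℕ` such that no configuration with symbols `< N` avoids `F`. -/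
def DP {K : Type} [Group K] {m : ℕ} (T : Fin m → K) : Set (ℕ × List (PatternCoding m ℕ)) :=
  {q | ¬ ∃ x : K → ℕ, (∀ g, x g < q.1) ∧ x ∈ XC T {c | c ∈ q.2}}

/-- The origin constrained domino problem of `(K,T)`: triples `((N,a),F)` such that no
configuration with symbols `< N` and the symbol `a` at the origin avoids `F`. -/
def OCDP {K : Type} [Group K] {m : ℕ} (T : Fin m → K) :
    Set ((ℕ × ℕ) × List (PatternCoding m ℕ)) :=
  {q | ¬ ∃ x : K → ℕ, (∀ g, x g < q.1.1) ∧ x 1 = q.1.2 ∧ x ∈ XC T {c | c ∈ q.2}}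

end SDG

/-!
Fix `n` such that `Γ(G,S) \ B_n` has two infinite components, and let `X_T` be the set of
configurations over `{0,1,2}` in which every `1` sees every `2` at a word distance lying in
`T ⊆ ℕ`. Whether a `1` and a `2` at given positions are allowed depends only on the word length
of one element, which the word-problem oracle computes by searching through balls; so `X_T` is
`G`-effectively closed as soon as `T` is decidable.

A path joining the two components crosses `B_n`, so a `1` at length `a` in one component and a
`2` at length `b` in the other lie at distance in `[a + b - 2n, a + b]`. With
`m_j = (2n + 2) 3^j`, let `T` be the union of the windows `[2m_j - 2n, 2m_j]`; these windows miss
`[m_i + m_j - 2n, m_i + m_j]` for `i ≠ j`. Placing a `1` and a `2` at length `m_j` in the two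
components gives a point of `X_T` for every `j`. If `X_T` were sofic, the SFT preimages of two of
these points, say for `i ≠ j`, would agree on a large ball; following the first preimage on the
first component and the second one elsewhere still gives a point of the SFT, whose image has a
`1` at length `m_i` and a `2` at length `m_j` in different components, a contradiction.
-/

/-! ### Continuous maps into discrete spaces -/

theorem ContinuousWithinAt.exists_finset_eq {ι B C : Type*} [TopologicalSpace B]
    [DiscreteTopology B] [TopologicalSpace C] [DiscreteTopology C] {Y : Set (ι → B)}
    {f : (ι → B) → C} {y : ι → B} (hf : ContinuousWithinAt f Y y) :
    ∃ I : Finset ι, ∀ z ∈ Y, (∀ i ∈ I, z i = y i) → f z = f y := by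
  obtain ⟨U, hU, hyU, hUf⟩ := mem_nhdsWithin.1 (hf ((isOpen_discrete {f y}).mem_nhds rfl))
  obtain ⟨I, u, hu, hIU⟩ := isOpen_pi_iff.1 hU y hyU
  exact ⟨I, fun z hz hzy => hUf ⟨hIU fun i hi => hzy i hi ▸ (hu i hi).2, hz⟩⟩

theorem IsCompact.exists_finset_eq_of_continuousOn {ι B C : Type*} [TopologicalSpace B]
    [DiscreteTopology B] [TopologicalSpace C] [DiscreteTopology C] {Y : Set (ι → B)}
    (hY : IsCompact Y) {f : (ι → B) → C} (hf : ContinuousOn f Y) :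
    ∃ F : Finset ι, ∀ y₁ ∈ Y, ∀ y₂ ∈ Y, (∀ i ∈ F, y₁ i = y₂ i) → f y₁ = f y₂ := by
  choose I hI using fun y : Y => (hf y.1 y.2).exists_finset_eq
  have hcyl : ∀ y : Y, IsOpen {z : ι → B | ∀ i ∈ I y, z i = y.1 i} := fun y => by
    simpa [Set.pi, Set.mem_singleton_iff] using
      isOpen_set_pi (I y).finite_toSet fun i _ => isOpen_discrete {y.1 i}
  obtain ⟨t, ht⟩ := hY.elim_finite_subcover _ hcyl fun z hz =>
    Set.mem_iUnion.2 ⟨⟨z, hz⟩, fun _ _ => rfl⟩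
  refine ⟨t.sup I, fun y₁ h₁ y₂ h₂ h₁₂ => ?_⟩
  obtain ⟨y, hyt, hy₁⟩ := Set.mem_iUnion₂.1 (ht h₁)
  have hy₂ : ∀ i ∈ I y, y₂ i = y.1 i := fun i hi =>
    (h₁₂ i (Finset.mem_sup.2 ⟨y, hyt, hi⟩)).symm.trans (hy₁ i hi)
  rw [hI y y₁ h₁ hy₁, hI y y₂ h₂ hy₂]

/-! ### Oracle computability -/

section RecursiveIn

open Encodable

variable {α β σ : Type*} [Primcodable α] [Primcodable β] [Primcodable σ] {O : Set (ℕ →. ℕ)}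

theorem RecursiveIn.comp {f : β →. σ} {g : α → β} (hf : RecursiveIn O f) (hg : Computable g) :
    RecursiveIn O fun a => f (g a) :=
  (Nat.RecursiveIn.comp hf hg.computableIn).of_eq fun n => by
    rcases decode (α := α) n with _ | a <;> simp [encodek, Part.bind_some]

theorem RecursiveIn.bind {f : α →. β} {g : α → β →. σ} (hf : RecursiveIn O f)
    (hg : RecursiveIn₂ O g) : RecursiveIn O fun a => (f a).bind (g a) :=
  (Nat.RecursiveIn.comp hg (Nat.RecursiveIn.pair (Nat.Partrec.some.recursiveIn) hf)).of_eq
    fun n => by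
      simp only [Seq.seq]
      rcases e : decode (α := α) n with _ | a <;> simp [e, encodek]
      exact (Part.map_bind _ _ _).symm

theorem RecursiveIn.map {f : α →. β} {g : α → β → σ} (hf : RecursiveIn O f)
    (hg : Computable₂ g) : RecursiveIn O fun a => (f a).map (g a) := by
  simpa [Part.bind_some_eq_map] using
    RecursiveIn.bind (g := fun a x => Part.some (g a x)) hf hg.computableIn

theorem ComputableIn.comp {f : β → σ} {g : α → β} (hf : ComputableIn O f) (hg : Computable g) :
    ComputableIn O fun a => f (g a) :=
  RecursiveIn.comp (f := fun b => Part.some (f b)) hf hg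

theorem Computable₂.comp_computableIn {f : α → β → σ} {g : α → β} (hf : Computable₂ f)
    (hg : ComputableIn O g) : ComputableIn O fun a => f a (g a) :=
  (RecursiveIn.map hg hf).of_eq fun a => by simp

theorem RecursiveIn.rfind {p : α → ℕ →. Bool} (hp : RecursiveIn₂ O p) :
    RecursiveIn O fun a => Nat.rfind (p a) :=
  -- `Nat.RecursiveIn.rfind` searches for a zero, so `true` is encoded as `0`
  (Nat.RecursiveIn.rfind <| RecursiveIn.map hp
      ((Primrec.dom_bool fun b => cond b 0 1).comp Primrec.snd).to₂.to_comp).of_eq fun n => by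
    rcases e : decode (α := α) n with _ | a <;> simp [e, Part.map_id']
    · exact Nat.rfind_zero_none _ rfl
    congr; funext m
    simp only [Part.map_map]
    refine Part.map_id' (fun b => ?_) _
    cases b <;> rfl

theorem ComputableIn.nat_find {p : α → ℕ → Bool} (hp : ComputableIn₂ O p)
    (h : ∀ a, ∃ m, p a m = true) : ComputableIn O fun a => Nat.find (h a) :=
  RecursiveIn.of_eq_tot (RecursiveIn.rfind (p := fun a m => Part.some (p a m)) hp) fun a =>
    Nat.mem_rfind.2 ⟨Part.mem_some_iff.2 (Nat.find_spec (h a)).symm,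
      fun hm => Part.mem_some_iff.2 (Bool.not_eq_true _ ▸ Nat.find_min (h a) hm).symm⟩

theorem ComputableIn.exists_lt {p : α → ℕ → Bool} {b : α → ℕ} (hp : ComputableIn₂ O p)
    (hb : Computable b) : ComputableIn O fun a => decide (∃ m < b a, p a m = true) := by
  have hq : ComputableIn₂ O fun a m => decide (b a ≤ m) || p a m :=
    Computable₂.comp_computableIn (f := fun (x : α × ℕ) (v : Bool) => decide (b x.1 ≤ x.2) || v)
      (Primrec.or.to_comp.comp (Primrec.nat_le.decide.to_comp.comp
        (hb.comp (Computable.fst.comp Computable.fst)) (Computable.snd.comp Computable.fst))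
        Computable.snd) hp
  have hstop : ∀ a, ∃ m, (decide (b a ≤ m) || p a m) = true := fun a => ⟨b a, by simp⟩
  refine ((Primrec.nat_lt.decide.to_comp.comp Computable.snd (hb.comp Computable.fst)).to₂
    |>.comp_computableIn (ComputableIn.nat_find hq hstop)).of_eq fun a => ?_
  simp only [Nat.find_lt_iff]
  congr 2
  exact propext <| exists_congr fun m => and_congr_right fun hm => by simp [Nat.not_le.2 hm]

theorem ComputableIn.exists_mem_list [Inhabited β] {l : α → List β} {p : α → β → Bool}
    (hl : Computable l) (hp : ComputableIn₂ O p) :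
    ComputableIn O fun a => decide (∃ x ∈ l a, p a x = true) := by
  refine (ComputableIn.exists_lt (p := fun a m => p a ((l a).getD m default))
    (hp.comp (Computable.fst.pair ((Primrec.list_getD default).to_comp.comp
      (hl.comp Computable.fst) Computable.snd)))
    (Primrec.list_length.to_comp.comp hl)).of_eq fun a => ?_
  simp only [List.mem_iff_getElem, List.getD_eq_getElem?_getD]
  congr 2
  exact propext ⟨fun ⟨m, hm, h⟩ => ⟨_, ⟨m, hm, rfl⟩, by simpa [hm] using h⟩,
    fun ⟨_, ⟨m, hm, hx⟩, h⟩ => ⟨m, hm, by simpa [hm, hx] using h⟩⟩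

end RecursiveIn

namespace SDG

variable {G : Type} [Group G] {k : ℕ} {S : Fin k → G}

open scoped Pointwise

theorem NatPartrecIn.of_recursiveIn {O : ℕ →. ℕ} {f : ℕ →. ℕ} (hf : Nat.RecursiveIn {O} f) :
    NatPartrecIn O f := by
  induction hf with
  | zero => exact .zero
  | succ => exact .succ
  | left => exact .left
  | right => exact .right
  | oracle g hg => rw [Set.mem_singleton_iff.1 hg]; exact .oracle
  | pair _ _ ih₁ ih₂ => exact .pair ih₁ ih₂
  | comp _ _ ih₁ ih₂ => exact .comp ih₁ ih₂
  | prec _ _ ih₁ ih₂ => exact .prec ih₁ ih₂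
  | rfind _ ih => exact .rfind ih

theorem RePredIn.of_computableIn {O : ℕ →. ℕ} {α : Type} [Primcodable α] {f : α → Bool}
    (hf : ComputableIn {O} f) : RePredIn O fun a => f a = true := by
  have hsearch : RecursiveIn {O} fun a => (Nat.rfind fun _ => Part.some (f a)).map fun _ => () :=
    (RecursiveIn.rfind (p := fun a _ => Part.some (f a)) (hf.comp Computable.fst)).map
      (Computable.const ()).to₂
  refine NatPartrecIn.of_recursiveIn (hsearch.of_eq fun a => Part.ext fun u => ?_)
  rcases h : f a
  · simpa [h, ← Part.dom_iff_mem] using fun hdom => by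
      simpa using Nat.rfind_spec (Part.get_mem hdom)
  · simpa [h] using ⟨0, Nat.mem_rfind.2 ⟨Part.mem_some _, nofun⟩⟩

theorem computableIn_decide_mem {β : Type} [Primcodable β] (L : Set β) :
    ComputableIn {charFun L} fun b => decide (b ∈ L) := by
  have hbit : ComputableIn {charFun L} fun b => if b ∈ L then 1 else 0 :=
    ((RecursiveIn.oracle _ (Set.mem_singleton _)).comp Computable.encode).of_eq fun b => by
      simp [charFun, Encodable.encode_inj]
  exact ((Primrec.eq.decide.comp Primrec.snd (Primrec.const 1)).to_comp.to₂.comp_computableIn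
    hbit).of_eq fun b => by simp

/-! ### Word length -/

@[simp] theorem wordEval_nil : wordEval S [] = 1 := rfl

@[simp] theorem wordEval_cons (i : Fin k) (w : List (Fin k)) :
    wordEval S (i :: w) = S i * wordEval S w := List.prod_cons

@[simp] theorem wordEval_append (w₁ w₂ : List (Fin k)) :
    wordEval S (w₁ ++ w₂) = wordEval S w₁ * wordEval S w₂ := by simp [wordEval]

def invWord (ι : Fin k → Fin k) (w : List (Fin k)) : List (Fin k) := (w.map ι).reverse

theorem wordEval_invWord {ι : Fin k → Fin k} (hι : ∀ i, S (ι i) = (S i)⁻¹) (w : List (Fin k)) :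
    wordEval S (invWord ι w) = (wordEval S w)⁻¹ := by
  induction w with
  | nil => simp [invWord]
  | cons i w ih => simp_all [invWord]

theorem IsGenData.exists_wordEval_eq (hS : IsGenData S) (g : G) :
    ∃ w : List (Fin k), wordEval S w = g := by
  obtain ⟨-, hinv, hgen⟩ := hS
  choose ι hι using hinv
  have hg : g ∈ Subgroup.closure (Set.range S) := hgen ▸ Subgroup.mem_top g
  induction hg using Subgroup.closure_induction with
  | mem z hz => obtain ⟨i, rfl⟩ := hz; exact ⟨[i], by simp⟩
  | one => exact ⟨[], rfl⟩
  | mul a b _ _ iha ihb =>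
      obtain ⟨wa, rfl⟩ := iha; obtain ⟨wb, rfl⟩ := ihb
      exact ⟨wa ++ wb, wordEval_append wa wb⟩
  | inv a _ iha => obtain ⟨wa, rfl⟩ := iha; exact ⟨invWord ι wa, wordEval_invWord hι wa⟩

theorem ballS_mono {s t : ℕ} (h : s ≤ t) : ballS S s ⊆ ballS S t := by
  rintro g ⟨w, hw, rfl⟩; exact ⟨w, hw.trans h, rfl⟩

def wordsLe (k : ℕ) : ℕ → List (List (Fin k))
  | 0 => [[]]
  | t + 1 => [] :: (wordsLe k t).flatMap fun w => (List.finRange k).map (· :: w)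

theorem mem_wordsLe {t : ℕ} {w : List (Fin k)} : w ∈ wordsLe k t ↔ w.length ≤ t := by
  induction t generalizing w with
  | zero => simp [wordsLe]
  | succ t ih =>
      rcases w with _ | ⟨i, w⟩
      · simp [wordsLe]
      · simp [wordsLe, ih]

theorem primrec_wordsLe : Primrec (wordsLe k) := by
  have hstep : Primrec₂ fun (_ : ℕ) (l : List (List (Fin k))) =>
      [] :: l.flatMap fun w => (List.finRange k).map (· :: w) :=
    Primrec.list_cons.comp (Primrec.const []) <| Primrec.list_flatMap Primrec.snd <|
      Primrec.list_map (Primrec.const _)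
        (Primrec.list_cons.comp Primrec.snd (Primrec.snd.comp Primrec.fst)).to₂
  refine (Primrec.nat_rec₁ [[]] hstep).of_eq fun t => ?_
  induction t with
  | zero => rfl
  | succ t ih => simp only [wordsLe, ← ih]

theorem ballS_finite (S : Fin k → G) (t : ℕ) : (ballS S t).Finite :=
  ((wordsLe k t).finite_toSet.image (wordEval S)).subset fun _ ⟨w, hw, hg⟩ =>
    ⟨w, mem_wordsLe.2 hw, hg⟩

/-- Junk value `0` when no word represents `g`. -/
def wordLength (S : Fin k → G) (g : G) : ℕ := sInf {t | g ∈ ballS S t}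

theorem wordLength_le_length {w : List (Fin k)} {g : G} (h : wordEval S w = g) :
    wordLength S g ≤ w.length :=
  Nat.sInf_le ⟨w, le_rfl, h⟩

theorem IsGenData.exists_word_length_eq (hS : IsGenData S) (g : G) :
    ∃ w : List (Fin k), wordEval S w = g ∧ w.length = wordLength S g := by
  obtain ⟨w₀, hw₀⟩ := hS.exists_wordEval_eq g
  obtain ⟨w, hw, hg⟩ : g ∈ ballS S (wordLength S g) :=
    Nat.sInf_mem (s := {t | g ∈ ballS S t}) ⟨w₀.length, w₀, le_rfl, hw₀⟩
  exact ⟨w, hg, le_antisymm hw (wordLength_le_length hg)⟩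

theorem IsGenData.wordLength_le_iff (hS : IsGenData S) {g : G} {t : ℕ} :
    wordLength S g ≤ t ↔ g ∈ ballS S t := by
  refine ⟨fun h => ?_, fun h => Nat.sInf_le h⟩
  obtain ⟨w, hg, hw⟩ := hS.exists_word_length_eq g
  exact ⟨w, hw ▸ h, hg⟩

theorem IsGenData.wordLength_mul_le (hS : IsGenData S) (g h : G) :
    wordLength S (g * h) ≤ wordLength S g + wordLength S h := by
  obtain ⟨w₁, rfl, hw₁⟩ := hS.exists_word_length_eq g
  obtain ⟨w₂, rfl, hw₂⟩ := hS.exists_word_length_eq h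
  simpa [← hw₁, ← hw₂] using wordLength_le_length (wordEval_append w₁ w₂)

theorem IsGenData.wordLength_inv (hS : IsGenData S) (g : G) :
    wordLength S g⁻¹ = wordLength S g := by
  choose ι hι using hS.2.1
  have key : ∀ g : G, wordLength S g⁻¹ ≤ wordLength S g := fun g => by
    obtain ⟨w, rfl, hw⟩ := hS.exists_word_length_eq g
    simpa [invWord, hw] using wordLength_le_length (wordEval_invWord hι w)
  exact le_antisymm (key g) (by simpa using key g⁻¹)

theorem IsGenData.wordLength_mul_gen_le (hS : IsGenData S) (g : G) (i : Fin k) :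
    wordLength S (g * S i) ≤ wordLength S g + 1 :=
  (hS.wordLength_mul_le g (S i)).trans <| by
    simpa using wordLength_le_length (S := S) (w := [i]) (by simp)

theorem primrec_invWord (ι : Fin k → Fin k) : Primrec (invWord ι) :=
  Primrec.list_reverse.comp <|
    Primrec.list_map Primrec.id ((Primrec.dom_finite ι).comp Primrec.snd)

theorem IsGenData.computableIn_wordLength (hS : IsGenData S) :
    ComputableIn {charFun (WP S)} fun w => wordLength S (wordEval S w) := by
  choose ι hι using hS.2.1
  -- `invWord ι w' ++ w ∈ WP S` asks the oracle whether `w'` and `w` represent the same element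
  let q : List (Fin k) → ℕ → Bool := fun w t =>
    decide (∃ w' ∈ wordsLe k t, decide (invWord ι w' ++ w ∈ WP S) = true)
  have hq : ComputableIn₂ {charFun (WP S)} q :=
    ComputableIn.exists_mem_list (primrec_wordsLe.to_comp.comp Computable.snd)
      ((computableIn_decide_mem (WP S)).comp (Primrec.list_append.comp
        ((primrec_invWord ι).comp Primrec.snd) (Primrec.fst.comp Primrec.fst)).to_comp)
  have hiff : ∀ w t, q w t = true ↔ wordLength S (wordEval S w) ≤ t := fun w t => by
    simp only [q, decide_eq_true_eq, mem_wordsLe, WP, Set.mem_ofPred_eq, wordEval_append,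
      wordEval_invWord hι, inv_mul_eq_one]
    refine ⟨fun ⟨w', hw', he⟩ => (wordLength_le_length he).trans hw', fun h => ?_⟩
    obtain ⟨w', he, hw'⟩ := hS.exists_word_length_eq (wordEval S w)
    exact ⟨w', hw' ▸ h, he⟩
  have hex : ∀ w, ∃ t, q w t = true := fun w => ⟨w.length, (hiff w _).2 (wordLength_le_length rfl)⟩
  refine (ComputableIn.nat_find hq hex).of_eq fun w => congrArg Part.some ?_
  exact le_antisymm (Nat.find_min' _ ((hiff w _).2 le_rfl)) ((hiff w _).1 (Nat.find_spec (hex w)))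

/-! ### The subshift `X_T` -/

def markerShift (S : Fin k → G) (T : Set ℕ) : Set (G → Fin 3) :=
  {x | ∀ u v, x u = 1 → x v = 2 → wordLength S (u⁻¹ * v) ∈ T}

theorem isSubshift_markerShift (S : Fin k → G) (T : Set ℕ) : IsSubshift (markerShift S T) := by
  let : TopologicalSpace (Fin 3) := ⊥
  have : DiscreteTopology (Fin 3) := ⟨rfl⟩
  refine ⟨?_, fun x hx g u v hu hv => by simpa [mul_assoc] using hx _ _ hu hv⟩
  have : markerShift S T = ⋂ (u : G) (v : G), (fun x : G → Fin 3 => (x u, x v)) ⁻¹'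
      {p | p.1 = 1 → p.2 = 2 → wordLength S (u⁻¹ * v) ∈ T} := by
    ext; simp [markerShift]
  rw [this]
  exact isClosed_iInter fun u => isClosed_iInter fun v =>
    (isClosed_discrete _).preimage (by fun_prop)

def markerCodings (S : Fin k → G) (T : Set ℕ) : Set (PatternCoding k (Fin 3)) :=
  {c | ∃ w, c = [([], 1), (w, 2)] ∧ wordLength S (wordEval S w) ∉ T}

theorem markerShift_eq_XC (hS : IsGenData S) (T : Set ℕ) :
    markerShift S T = XC S (markerCodings S T) := by
  ext x
  refine ⟨fun hx ⟨g, _, ⟨w, rfl, hw⟩, hocc⟩ => hw ?_, fun hx u v hu hv => ?_⟩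
  · have := hx g (g * wordEval S w) (by simpa using hocc ([], 1) (by simp))
      (hocc (w, 2) (by simp))
    rwa [inv_mul_cancel_left] at this
  · by_contra hT
    obtain ⟨w, hw⟩ := hS.exists_wordEval_eq (u⁻¹ * v)
    exact hx ⟨u, _, ⟨w, rfl, hw ▸ hT⟩, by simp [hw, hu, hv]⟩

theorem gEffectivelyClosed_markerShift (hS : IsGenData S) {T : Set ℕ}
    (hT : ComputablePred (· ∈ T)) : GEffectivelyClosed S (markerShift S T) := by
  refine ⟨markerCodings S T, ?_, markerShift_eq_XC hS T⟩
  obtain ⟨χ, hχ, hTχ⟩ := ComputablePred.computable_iff.1 hT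
  let second : PatternCoding k (Fin 3) → List (Fin k) := fun c => (c.getD 1 ([], 0)).1
  have hsecond : Primrec second :=
    Primrec.fst.comp ((Primrec.list_getD _).comp Primrec.id (Primrec.const 1))
  have hshape : Primrec fun c : PatternCoding k (Fin 3) =>
      decide (c = [([], 1), (second c, 2)]) :=
    Primrec.eq.decide.comp Primrec.id (Primrec.list_cons.comp (Primrec.const _)
      (Primrec.list_cons.comp (Primrec.pair hsecond (Primrec.const 2)) (Primrec.const [])))
  have hf : ComputableIn {charFun (WP S)} fun c : PatternCoding k (Fin 3) =>
      decide (c = [([], 1), (second c, 2)]) && !χ (wordLength S (wordEval S (second c))) :=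
    Computable₂.comp_computableIn (f := fun c L => decide (c = [([], 1), (second c, 2)]) && !χ L)
      (Primrec.and.to_comp.comp (hshape.to_comp.comp Computable.fst)
        (Primrec.not.to_comp.comp (hχ.comp Computable.snd)))
      (hS.computableIn_wordLength.comp hsecond.to_comp)
  convert RePredIn.of_computableIn hf using 2 with c
  have hTχ' : ∀ L, L ∈ T ↔ χ L = true := fun L => iff_of_eq (congrFun hTχ L)
  simp only [markerCodings, Set.mem_ofPred_eq, hTχ', Bool.and_eq_true, decide_eq_true_eq,
    Bool.not_eq_true', Bool.not_eq_true]
  constructor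
  · rintro ⟨w, rfl, hw⟩
    exact ⟨rfl, hw⟩
  · rintro ⟨hc, hχc⟩
    exact ⟨second c, hc, hχc⟩

/-! ### Paths avoiding a ball -/

theorem IsGenData.reach_symm (hS : IsGenData S) {V : Set G} {a b : G} (h : Reach S V a b) :
    Reach S V b a :=
  have : Std.Symm (Adj S V) := ⟨fun _ _ ⟨ha, hb, i, hi⟩ => by
    obtain ⟨j, hj⟩ := hS.2.1 i
    exact ⟨hb, ha, j, by rw [hj, ← hi, mul_inv_cancel_right]⟩⟩
  Std.Symm.symm (r := Relation.ReflTransGen (Adj S V)) _ _ h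

theorem reach_or_exists_prefix_not_mem (V : Set G) (u : G) (w : List (Fin k)) :
    Reach S V u (u * wordEval S w) ∨ ∃ t, u * wordEval S (w.take t) ∉ V := by
  induction w generalizing u with
  | nil => exact .inl (by rw [wordEval_nil, mul_one]; exact .refl)
  | cons i w ih =>
      by_cases hu : u ∈ V
      swap; · exact .inr ⟨0, by simpa using hu⟩
      by_cases hui : u * S i ∈ V
      swap; · exact .inr ⟨1, by simpa using hui⟩
      rcases ih (u * S i) with hr | ⟨t, hnot⟩
      · exact .inl (by rw [wordEval_cons, ← mul_assoc]; exact .head ⟨hu, hui, i, rfl⟩ hr)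
      · exact .inr ⟨t + 1, by simpa [mul_assoc] using hnot⟩

theorem IsGenData.exists_mem_ballS_of_not_reach (hS : IsGenData S) {n : ℕ} {a b : G}
    (h : ¬ Reach S (ballS S n)ᶜ a b) : ∃ p ∈ ballS S n,
      wordLength S (a⁻¹ * p) + wordLength S (p⁻¹ * b) ≤ wordLength S (a⁻¹ * b) := by
  obtain ⟨w, hw, hlen⟩ := hS.exists_word_length_eq (a⁻¹ * b)
  rcases reach_or_exists_prefix_not_mem (S := S) (ballS S n)ᶜ a w with hr | ⟨t, ht⟩
  · exact absurd (by simpa [hw] using hr) h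
  refine ⟨_, not_not.1 ht, ?_⟩
  have hdrop : (a * wordEval S (w.take t))⁻¹ * b = wordEval S (w.drop t) := by
    have hb : b = a * (wordEval S (w.take t) * wordEval S (w.drop t)) := by
      rw [← wordEval_append, List.take_append_drop, hw, mul_inv_cancel_left]
    rw [hb]
    group
  rw [inv_mul_cancel_left, hdrop, ← hlen, ← List.take_append_drop t w, List.length_append]
  exact add_le_add (wordLength_le_length (by simp)) (wordLength_le_length (by simp))

theorem IsGenData.wordLength_add_le_of_not_reach (hS : IsGenData S) {n : ℕ} {a b : G}
    (h : ¬ Reach S (ballS S n)ᶜ a b) :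
    wordLength S a + wordLength S b ≤ 2 * n + wordLength S (a⁻¹ * b) := by
  obtain ⟨p, hp, hsum⟩ := hS.exists_mem_ballS_of_not_reach h
  have hpn := hS.wordLength_le_iff.2 hp
  have ha : wordLength S a ≤ wordLength S p + wordLength S (a⁻¹ * p) := by
    have hinv := hS.wordLength_inv (a⁻¹ * p)
    rw [mul_inv_rev, inv_inv] at hinv
    simpa [hinv] using hS.wordLength_mul_le p (p⁻¹ * a)
  have hb : wordLength S b ≤ wordLength S p + wordLength S (p⁻¹ * b) := by
    simpa using hS.wordLength_mul_le p (p⁻¹ * b)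
  omega

theorem IsGenData.reach_or_mem_ballS (hS : IsGenData S) {n d : ℕ} {u v : G}
    (h : wordLength S (u⁻¹ * v) ≤ d) : Reach S (ballS S n)ᶜ u v ∨ v ∈ ballS S (n + d) := by
  refine or_iff_not_imp_left.2 fun hr => ?_
  obtain ⟨p, hp, hsum⟩ := hS.exists_mem_ballS_of_not_reach hr
  have hpn := hS.wordLength_le_iff.2 hp
  have hv : wordLength S v ≤ wordLength S p + wordLength S (p⁻¹ * v) := by
    simpa using hS.wordLength_mul_le p (p⁻¹ * v)
  exact hS.wordLength_le_iff.1 (by omega)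

theorem IsGenData.exists_reach_wordLength_eq (hS : IsGenData S) {V : Set G} {x u : G}
    (hr : Reach S V x u) {m : ℕ} (h₁ : wordLength S x ≤ m) (h₂ : m ≤ wordLength S u) :
    ∃ a, Reach S V x a ∧ wordLength S a = m := by
  induction hr with
  | refl => exact ⟨x, .refl, le_antisymm h₁ h₂⟩
  | @tail b c hxb hbc ih =>
      by_cases hm : m ≤ wordLength S b
      · exact ih hm
      obtain ⟨hb, hc, i, rfl⟩ := hbc
      exact ⟨b * S i, hxb.tail ⟨hb, hc, i, rfl⟩, by
        have := hS.wordLength_mul_gen_le b i; omega⟩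

theorem IsGenData.exists_reach_wordLength_eq_of_infinite (hS : IsGenData S) {V : Set G} {x : G}
    (hinf : {z | Reach S V x z}.Infinite) {m : ℕ} (hm : wordLength S x ≤ m) :
    ∃ a, Reach S V x a ∧ wordLength S a = m := by
  obtain ⟨u, hu, hmu⟩ : ∃ u, Reach S V x u ∧ m ≤ wordLength S u := by
    by_contra! hsmall
    exact hinf ((ballS_finite S m).subset fun u hu => hS.wordLength_le_iff.1 (hsmall u hu).le)
  exact hS.exists_reach_wordLength_eq hu hm hmu

/-! ### Gluing in sofic shifts -/

theorem IsSFT.exists_finset_mem_of_forall_agree {A : Type} {Y : Set (G → A)} (hY : IsSFT Y) :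
    ∃ K : Finset G, ∀ z : G → A, (∀ g, ∃ y ∈ Y, ∀ h ∈ K, z (g * h) = y (g * h)) → z ∈ Y := by
  obtain ⟨Fs, hFs, rfl⟩ := hY
  refine ⟨hFs.toFinset.biUnion Pattern.supp, fun z hz ⟨g, p, hp, hocc⟩ => ?_⟩
  obtain ⟨y, hy, hyz⟩ := hz g
  exact hy ⟨g, p, hp, fun h hh =>
    (hyz h (Finset.mem_biUnion.2 ⟨p, hFs.mem_toFinset.2 hp, hh⟩)).symm.trans (hocc h hh)⟩

theorem SoficVia.exists_finset_phi_eq {A : Type} {X : Set (G → A)} (V : SoficVia G X) :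
    ∃ F : Finset G, ∀ y₁ ∈ V.Y, ∀ y₂ ∈ V.Y, ∀ g,
      (∀ h ∈ F, y₁ (g * h) = y₂ (g * h)) → V.phi y₁ g = V.phi y₂ g := by
  let : TopologicalSpace V.B := ⊥
  let : TopologicalSpace A := ⊥
  have : DiscreteTopology V.B := ⟨rfl⟩
  have : DiscreteTopology A := ⟨rfl⟩
  have : Finite V.B := @Finite.of_fintype _ V.finB
  have hshift : ∀ y ∈ V.Y, ∀ g : G,
      (fun h => y (g * h)) ∈ V.Y ∧ V.phi y g = V.phi (fun h => y (g * h)) 1 := fun y hy g => by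
    have hequiv := congrFun (V.equiv y hy g⁻¹) 1
    simp only [inv_inv, mul_one] at hequiv
    simpa [hequiv] using V.subY.2 y hy g⁻¹
  obtain ⟨F, hF⟩ := V.subY.1.isCompact.exists_finset_eq_of_continuousOn
    ((continuous_apply 1).comp_continuousOn V.cont)
  refine ⟨F, fun y₁ h₁ y₂ h₂ g h₁₂ => ?_⟩
  rw [(hshift y₁ h₁ g).2, (hshift y₂ h₂ g).2]
  exact hF _ (hshift y₁ h₁ g).1 _ (hshift y₂ h₂ g).1 h₁₂

theorem IsSofic.exists_glue {A : Type} {X : Set (G → A)} (hX : IsSofic X) :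
    ∃ K : Finset G, ∀ (E : Finset G) (D : Set G),
      (∀ g : G, g • (K : Set G) ⊆ D ∪ E ∨ g • (K : Set G) ⊆ Dᶜ ∪ E) →
      ∀ {ι : Type} [Infinite ι] (x : ι → G → A), (∀ i, x i ∈ X) →
      ∃ i i', i ≠ i' ∧ ∃ x' ∈ X, ∀ g : G,
        (g • (K : Set G) ⊆ D ∪ E → x' g = x i g) ∧ (g • (K : Set G) ⊆ Dᶜ ∪ E → x' g = x i' g) := by
  obtain ⟨V⟩ := hX
  obtain ⟨K₀, hK₀⟩ := V.sft.exists_finset_mem_of_forall_agree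
  obtain ⟨F, hF⟩ := V.exists_finset_phi_eq
  refine ⟨K₀ ∪ F, fun E D hbd ι _ x hx => ?_⟩
  choose y hyY hyx using fun i => (V.image.symm ▸ hx i : x i ∈ V.phi '' V.Y)
  have : Finite V.B := @Finite.of_fintype _ V.finB
  obtain ⟨i, i', hne, hyE⟩ := Finite.exists_ne_map_eq_of_infinite fun i (e : E) => y i e
  have hyE' : ∀ g ∈ E, y i g = y i' g := fun g hg => congrFun hyE ⟨g, hg⟩
  -- the two preimages agree on `E`, so switching between them across the boundary of `D`
  -- creates no forbidden pattern
  let z : G → V.B := fun g => if g ∈ D then y i g else y i' g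
  have hz : ∀ g ∈ D ∪ E, z g = y i g := fun g hg => by
    by_cases hD : g ∈ D
    · exact if_pos hD
    · exact (if_neg hD).trans (hyE' g (hg.resolve_left hD)).symm
  have hz' : ∀ g ∈ Dᶜ ∪ E, z g = y i' g := fun g hg => by
    by_cases hD : g ∈ D
    · exact (if_pos hD).trans (hyE' g (hg.resolve_left (not_not.2 hD)))
    · exact if_neg hD
  have hzY : z ∈ V.Y := hK₀ z fun g => (hbd g).elim
    (fun hg => ⟨y i, hyY i, fun h hh =>
      hz _ (hg (Set.smul_mem_smul_set (Finset.mem_union_left _ hh)))⟩)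
    (fun hg => ⟨y i', hyY i', fun h hh =>
      hz' _ (hg (Set.smul_mem_smul_set (Finset.mem_union_left _ hh)))⟩)
  have hzX : V.phi z ∈ X := by simpa only [V.image] using Set.mem_image_of_mem V.phi hzY
  refine ⟨i, i', hne, V.phi z, hzX, fun g => ⟨fun hg => ?_, fun hg => ?_⟩⟩
  · rw [← hyx i]
    exact hF z hzY (y i) (hyY i) g fun h hh =>
      hz _ (hg (Set.smul_mem_smul_set (Finset.mem_union_right _ hh)))
  · rw [← hyx i']
    exact hF z hzY (y i') (hyY i') g fun h hh =>
      hz' _ (hg (Set.smul_mem_smul_set (Finset.mem_union_right _ hh)))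

/-! ### Non-soficity of `X_T` -/

def markerConfig (a b : G) : G → Fin 3 := fun g => if g = a then 1 else if g = b then 2 else 0

theorem markerConfig_mem_markerShift {a b : G} {T : Set ℕ}
    (h : wordLength S (a⁻¹ * b) ∈ T) : markerConfig a b ∈ markerShift S T := by
  intro u v hu hv
  obtain rfl : u = a := by
    by_contra hua; unfold markerConfig at hu; split_ifs at hu <;> simp at hu
  obtain rfl : v = b := by
    by_contra hvb; unfold markerConfig at hv; split_ifs at hv <;> simp at hv
  exact h

theorem IsGenData.wordLength_inv_mul_mem_Icc (hS : IsGenData S) {n : ℕ} {a b : G}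
    (h : ¬ Reach S (ballS S n)ᶜ a b) : wordLength S (a⁻¹ * b) ∈
      Set.Icc (wordLength S a + wordLength S b - 2 * n) (wordLength S a + wordLength S b) := by
  have hlow := hS.wordLength_add_le_of_not_reach h
  have hup := hS.wordLength_mul_le a⁻¹ b
  rw [hS.wordLength_inv] at hup
  exact ⟨by omega, hup⟩

theorem IsGenData.smul_subset_component_union_ballS (hS : IsGenData S) {K : Finset G}
    {n r : ℕ} (hK : ∀ h ∈ K, wordLength S h ≤ r) {x a : G} (hxa : Reach S (ballS S n)ᶜ x a) :
    a • (K : Set G) ⊆ {z | Reach S (ballS S n)ᶜ x z} ∪ ballS S (n + r) := by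
  rintro _ ⟨h, hh, rfl⟩
  exact (hS.reach_or_mem_ballS (by simpa using hK h hh)).imp_left hxa.trans

theorem IsGenData.smul_subset_compl_component_union_ballS (hS : IsGenData S) {K : Finset G}
    {n r : ℕ} (hK : ∀ h ∈ K, wordLength S h ≤ r) {x y b : G} (hxy : ¬ Reach S (ballS S n)ᶜ x y)
    (hyb : Reach S (ballS S n)ᶜ y b) :
    b • (K : Set G) ⊆ {z | Reach S (ballS S n)ᶜ x z}ᶜ ∪ ballS S (n + r) := by
  rintro _ ⟨h, hh, rfl⟩
  exact (hS.reach_or_mem_ballS (by simpa using hK h hh)).imp_left fun hr hxz =>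
    hxy (hxz.trans (hS.reach_symm (hyb.trans hr)))

theorem IsGenData.smul_subset_component_or_compl (hS : IsGenData S) {K : Finset G} {n r : ℕ}
    (hK : ∀ h ∈ K, wordLength S h ≤ r) (x g : G) :
    g • (K : Set G) ⊆ {z | Reach S (ballS S n)ᶜ x z} ∪ ballS S (n + 2 * r) ∨
      g • (K : Set G) ⊆ {z | Reach S (ballS S n)ᶜ x z}ᶜ ∪ ballS S (n + 2 * r) := by
  refine or_iff_not_imp_left.2 fun hout => ?_
  obtain ⟨_, ⟨h₁, hh₁, rfl⟩, hx₁⟩ := Set.not_subset.1 hout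
  rintro _ ⟨h, hh, rfl⟩
  by_contra! hin
  simp only [Set.mem_union, Set.mem_compl_iff, not_or, not_not] at hin hx₁
  have hdist : wordLength S ((g • h₁)⁻¹ * (g • h)) ≤ 2 * r := by
    have := hS.wordLength_mul_le h₁⁻¹ h
    rw [hS.wordLength_inv] at this
    simp only [smul_eq_mul, mul_inv_rev, mul_assoc, inv_mul_cancel_left]
    linarith [hK h₁ hh₁, hK h hh]
  rcases hS.reach_or_mem_ballS hdist with hr | hb
  · exact hx₁.1 (Relation.ReflTransGen.trans hin.1 (hS.reach_symm hr))
  · exact hin.2 hb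

theorem infinite_setOf_le_of_injective {m : ℕ → ℕ} (hm : Function.Injective m) (N : ℕ) :
    {j | N ≤ m j}.Infinite := by
  convert ((Set.finite_Iio N).preimage hm.injOn).infinite_compl using 1
  ext j; simp

theorem IsGenData.not_isSofic_markerShift (hS : IsGenData S) {n : ℕ} {x y : G}
    (hx : {z | Reach S (ballS S n)ᶜ x z}.Infinite) (hy : {z | Reach S (ballS S n)ᶜ y z}.Infinite)
    (hxy : ¬ Reach S (ballS S n)ᶜ x y) {m : ℕ → ℕ} {T : Set ℕ}
    (hdiag : ∀ j, Set.Icc (m j + m j - 2 * n) (m j + m j) ⊆ T)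
    (hcross : ∀ i j, i ≠ j → Disjoint (Set.Icc (m i + m j - 2 * n) (m i + m j)) T) :
    ¬ IsSofic (markerShift S T) := by
  intro hsofic
  obtain ⟨K, hK⟩ := hsofic.exists_glue
  obtain ⟨r, hr⟩ : ∃ r, ∀ h ∈ K, wordLength S h ≤ r := ⟨_, fun h hh => Finset.le_sup hh⟩
  obtain ⟨E, hE⟩ : ∃ E : Finset G, (E : Set G) = ballS S (n + 2 * r) :=
    ⟨_, (ballS_finite S _).coe_toFinset⟩
  have hinj : Function.Injective m := fun i j hij => by
    by_contra hne
    have hT : m i + m j ∈ T := hdiag j ⟨by omega, by omega⟩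
    exact Set.disjoint_left.1 (hcross i j hne) ⟨Nat.sub_le _ _, le_rfl⟩ hT
  have : Infinite {j | wordLength S x + wordLength S y ≤ m j} :=
    (infinite_setOf_le_of_injective hinj _).to_subtype
  have hpts : ∀ j : {j | wordLength S x + wordLength S y ≤ m j}, ∃ a b,
      Reach S (ballS S n)ᶜ x a ∧ wordLength S a = m j ∧
        Reach S (ballS S n)ᶜ y b ∧ wordLength S b = m j := fun j => by
    obtain ⟨a, hxa, ha⟩ := hS.exists_reach_wordLength_eq_of_infinite hx (m := m j) (by grind)
    obtain ⟨b, hyb, hb⟩ := hS.exists_reach_wordLength_eq_of_infinite hy (m := m j) (by grind)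
    exact ⟨a, b, hxa, ha, hyb, hb⟩
  choose a b hxa ha hyb hb using hpts
  have hnot : ∀ i j, ¬ Reach S (ballS S n)ᶜ (a i) (b j) := fun i j hab =>
    hxy ((hxa i).trans (hab.trans (hS.reach_symm (hyb j))))
  have hmem : ∀ j, markerConfig (a j) (b j) ∈ markerShift S T := fun j =>
    markerConfig_mem_markerShift <| hdiag j <| by
      simpa [ha j, hb j] using hS.wordLength_inv_mul_mem_Icc (hnot j j)
  obtain ⟨i, i', hne, x', hx', hglue⟩ := hK E {z | Reach S (ballS S n)ᶜ x z}
    (fun g => hE ▸ hS.smul_subset_component_or_compl hr x g) _ hmem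
  have h₁ : x' (a i) = 1 := by
    rw [(hglue (a i)).1 (hE ▸ (hS.smul_subset_component_union_ballS hr (hxa i)).trans
      (Set.union_subset_union_right _ (ballS_mono (by omega)))), markerConfig, if_pos rfl]
  have h₂ : x' (b i') = 2 := by
    rw [(hglue (b i')).2 (hE ▸ (hS.smul_subset_compl_component_union_ballS hr hxy (hyb i')).trans
      (Set.union_subset_union_right _ (ballS_mono (by omega)))), markerConfig,
      if_neg fun h : b i' = a i' => hnot i' i' (h ▸ .refl), if_pos rfl]
  refine Set.disjoint_left.1 (hcross i i' fun h => hne (Subtype.ext h)) ?_ (hx' _ _ h₁ h₂)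
  simpa [ha, hb] using hS.wordLength_inv_mul_mem_Icc (hnot i i')

/-! ### A sparse set of lengths -/

def scale (n j : ℕ) : ℕ := (2 * n + 2) * 3 ^ j

def sparseLengths (n : ℕ) : Set ℕ :=
  ⋃ j, Set.Icc (scale n j + scale n j - 2 * n) (scale n j + scale n j)

theorem scale_mono (n : ℕ) {i j : ℕ} (h : i ≤ j) : scale n i ≤ scale n j :=
  Nat.mul_le_mul_left _ (Nat.pow_le_pow_right (by norm_num) h)

theorem scale_succ (n j : ℕ) : scale n (j + 1) = 3 * scale n j := by
  simp only [scale, pow_succ]; ring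

theorem disjoint_sparseLengths (n : ℕ) {i j : ℕ} (hij : i ≠ j) :
    Disjoint (Set.Icc (scale n i + scale n j - 2 * n) (scale n i + scale n j))
      (sparseLengths n) := by
  wlog hlt : i < j generalizing i j
  · simpa only [add_comm] using this hij.symm (by omega)
  obtain ⟨j, rfl⟩ : ∃ j', j = j' + 1 := ⟨j - 1, by omega⟩
  rw [Set.disjoint_left]
  rintro L ⟨hL₁, hL₂⟩ hL
  obtain ⟨l, hl₁, hl₂⟩ := Set.mem_iUnion.1 hL
  have hi : scale n i ≤ scale n j := scale_mono n (by omega)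
  have hbase : 2 * n + 2 ≤ scale n i := Nat.le_mul_of_pos_right _ (by positivity)
  have hj := scale_succ n j
  rcases lt_trichotomy l (j + 1) with hl | rfl | hl
  · have := scale_mono n (Nat.le_of_lt_succ hl)
    omega
  · omega
  · have : 3 * scale n (j + 1) ≤ scale n l := by rw [← scale_succ]; exact scale_mono n hl
    omega

theorem computablePred_mem_sparseLengths (n : ℕ) : ComputablePred (· ∈ sparseLengths n) := by
  have hscale : Primrec (scale n) :=
    Primrec.nat_mul.comp (Primrec.const _)
      ((Primrec₂.unpaired'.1 Nat.Primrec.pow).comp (Primrec.const 3) Primrec.id)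
  have hwindow : PrimrecRel fun j L =>
      scale n j + scale n j - 2 * n ≤ L ∧ L ≤ scale n j + scale n j :=
    PrimrecPred.and
      (Primrec.nat_le.comp (Primrec.nat_sub.comp (Primrec.nat_add.comp (hscale.comp Primrec.fst)
        (hscale.comp Primrec.fst)) (Primrec.const _)) Primrec.snd)
      (Primrec.nat_le.comp Primrec.snd
        (Primrec.nat_add.comp (hscale.comp Primrec.fst) (hscale.comp Primrec.fst)))
  refine (hwindow.exists_lt.comp (Primrec.succ) Primrec.id).computablePred.of_eq fun L => ?_
  simp only [sparseLengths, Set.mem_iUnion, Set.mem_Icc]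
  refine ⟨fun ⟨j, _, hj⟩ => ⟨j, hj⟩, ?_⟩
  rintro ⟨j, hj⟩
  have : j < 3 ^ j := Nat.lt_pow_self (by norm_num)
  have : 3 ^ j ≤ scale n j := Nat.le_mul_of_pos_left _ (by omega)
  have : 2 * n + 2 ≤ scale n j := Nat.le_mul_of_pos_right _ (by positivity)
  exact ⟨j, by omega, hj⟩

/-- Every finitely generated group with at least two ends admits a
`G`-effectively closed subshift over the alphabet `{0,1,2}` which is not sofic. -/
theorem twoEnds_gEffectivelyClosed_not_sofic
    {G : Type} [Group G] {k : ℕ} (S : Fin k → G) (hS : IsGenData S)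
    (hends : HasTwoOrMoreEnds S) :
    ∃ X : Set (G → Fin 3), IsSubshift X ∧ GEffectivelyClosed S X ∧ ¬ IsSofic X := by
  obtain ⟨n, x, y, -, -, hx, hy, hxy⟩ := hends
  exact ⟨markerShift S (sparseLengths n), isSubshift_markerShift S _,
    gEffectivelyClosed_markerShift hS (computablePred_mem_sparseLengths n),
    hS.not_isSofic_markerShift hx hy hxy (fun j => Set.subset_iUnion_of_subset j subset_rfl)
      fun _ _ => disjoint_sparseLengths n⟩

end SDG
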